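/- arXiv:0809.0827 — 4 statements merged into one kernel-verified Lean document; each statement's English description precedes it below -/
import Mathlib

section
/- For graphs P_1, …, P_m of orders p_1, …, p_m, let A be a Laplacian matrix of any graph product P_1 ⋄ ⋯ ⋄ P_m with tr(A) ≠ 0. Then (1/tr(A))·A is a separable density matrix in C^{p_1} × ⋯ × C^{p_m}. -/
open Matrix Finset
open scoped ComplexOrder

/-- A complex matrix is row diagonally dominant. -/
def RowDiagDom {α : Type*} [Fintype α] [DecidableEq α] (M : Matrix α α ℂ) : Prop :=
  ∀ i, (M i i).im = 0 ∧ ∑ j ∈ Finset.univ.erase i, ‖M i j‖ ≤ (M i i).re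

/-- A density matrix: Hermitian positive semidefinite with unit trace. -/
def IsDensityMatrix {α : Type*} [Fintype α] [DecidableEq α] (M : Matrix α α ℂ) : Prop :=
  M.PosSemidef ∧ M.trace = 1

/-- Tensor (Kronecker) product of a family of matrices, indexed by tuples. -/
def tensorFamily {m : ℕ} {p : Fin m → ℕ}
    (M : ∀ i, Matrix (Fin (p i)) (Fin (p i)) ℂ) :
    Matrix (∀ i, Fin (p i)) (∀ i, Fin (p i)) ℂ :=
  Matrix.of fun x y => ∏ i, M i (x i) (y i)

/-- Multipartite separability: A is a convex combination of tensor products of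
density matrices on the factors ℂ^{p_1}, …, ℂ^{p_m}. -/
def SepDensityFamily {m : ℕ} {p : Fin m → ℕ}
    (A : Matrix (∀ i, Fin (p i)) (∀ i, Fin (p i)) ℂ) : Prop :=
  ∃ (k : ℕ) (c : Fin k → ℝ) (ρ : Fin k → ∀ i, Matrix (Fin (p i)) (Fin (p i)) ℂ),
    (∀ t, 0 ≤ c t) ∧ (∑ t, c t = 1) ∧ (∀ t i, IsDensityMatrix (ρ t i)) ∧
    A = ∑ t, (c t : ℂ) • tensorFamily (ρ t)

open scoped Classical

/-- Per-coordinate relations used to define graph products: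
`0` = adjacent, `1` = equal, `2` = distinct and non-adjacent. -/
def coordRel {α : Type*} (G : SimpleGraph α) : Fin 3 → α → α → Prop
  | 0 => G.Adj
  | 1 => fun u w => u = w
  | 2 => fun u w => u ≠ w ∧ ¬ G.Adj u w

lemma coordRel_symm {α : Type*} (G : SimpleGraph α) (c : Fin 3) {u w : α}
    (h : coordRel G c u w) : coordRel G c w u := by
  fin_cases c
  · exact G.adj_symm h
  · exact h.symm
  · exact ⟨h.1.symm, fun ha => h.2 (G.adj_symm ha)⟩

/-- The graph product of a family of graphs `P i`, determined by the set `S` of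
condition vectors: two distinct tuples are adjacent iff some condition `c ∈ S`
holds in every coordinate. -/
def graphProdFamily {m : ℕ} {p : Fin m → ℕ} (P : ∀ i, SimpleGraph (Fin (p i)))
    (S : Finset (Fin m → Fin 3)) : SimpleGraph (∀ i, Fin (p i)) where
  Adj x y := x ≠ y ∧ ∃ c ∈ S, ∀ i, coordRel (P i) (c i) (x i) (y i)
  symm := ⟨by
    rintro x y ⟨hxy, c, hc, h⟩
    exact ⟨hxy.symm, c, hc, fun i => coordRel_symm (P i) (c i) (h i)⟩⟩
  loopless := ⟨fun x h => h.1 rfl⟩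

/-- The 0-1 adjacency matrix of a graph, over ℂ. -/
noncomputable def adjMatC {α : Type*} [Fintype α] (G : SimpleGraph α) : Matrix α α ℂ :=
  Matrix.of fun u v => if G.Adj u v then 1 else 0

/-- The Laplacian matrix D - B, where D is the diagonal matrix of row sums of the
(0-1) adjacency matrix B. -/
noncomputable def lapMat {α : Type*} [Fintype α] [DecidableEq α] (G : SimpleGraph α) :
    Matrix α α ℂ :=
  Matrix.diagonal (fun x => ∑ y, adjMatC G x y) - adjMatC G

/-!
The Laplacian of a graph is `∑ e_x (e_x - e_y)ᵀ` over the ordered edges `(x, y)`. Exchanging the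
coordinates of `x` and `y` on a set `s` of positions (giving `x^s = mix x y s` and
`y^s = mix y x s`) maps edges of a graph product to edges, so
`2^m • L = ∑_(x,y) ∑_s e_{x^s} (e_{x^s} - e_{y^s})ᵀ`, and the inner sum is `⊗ D_i - ⊗ O_i` with
`D_i = e_{x_i} e_{x_i}ᵀ + e_{y_i} e_{y_i}ᵀ` and `O_i = e_{x_i} e_{y_i}ᵀ + e_{y_i} e_{x_i}ᵀ`.
Now `D_i = P_i + Q_i` and `O_i = P_i - Q_i` for the positive semidefinite
`P_i, Q_i = ½ (e_{x_i} ± e_{y_i}) (e_{x_i} ± e_{y_i})ᵀ`, and in `⊗ (P_i + Q_i) - ⊗ (P_i - Q_i)` only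
the products with an odd number of factors `Q_i` survive, each with coefficient `2`. So `L` is a
nonnegative combination of products of density matrices, and normalizing by the trace gives the
claim.
-/

theorem Matrix.PosSemidef.ofReal_re_trace {α : Type*} [Fintype α] {M : Matrix α α ℂ}
    (hM : M.PosSemidef) : ((M.trace.re : ℝ) : ℂ) = M.trace :=
  (Complex.eq_re_of_ofReal_le (r := 0) (by exact_mod_cast hM.trace_nonneg)).symm

theorem isDensityMatrix_inv_trace_smul {α : Type*} [Fintype α] [DecidableEq α]
    {M : Matrix α α ℂ} (hM : M.PosSemidef) (htr : M.trace ≠ 0) :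
    IsDensityMatrix (M.trace⁻¹ • M) := by
  refine ⟨hM.smul ?_, by rw [trace_smul, smul_eq_mul, inv_mul_cancel₀ htr]⟩
  rw [← hM.ofReal_re_trace, ← Complex.ofReal_inv]
  exact Complex.zero_le_real.mpr (inv_nonneg.mpr (Complex.nonneg_iff.mp hM.trace_nonneg).1)

theorem prod_sign_le_one {ι : Type*} [Fintype ι] (s : ι → Bool) :
    ∏ i, (if s i then (-1 : ℝ) else 1) ≤ 1 := by
  refine le_trans (le_abs_self _) (le_of_eq ?_)
  rw [Finset.abs_prod]
  exact Finset.prod_eq_one fun i _ => by split <;> simp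

theorem exists_posSemidef_add_eq_and_sub_eq {α : Type*} [Fintype α] [DecidableEq α] (a b : α) :
    ∃ P Q : Matrix α α ℂ, P.PosSemidef ∧ Q.PosSemidef ∧
      P + Q = single a a 1 + single b b 1 ∧ P - Q = single a b 1 + single b a 1 := by
  set u : α → ℂ := Pi.single a 1 + Pi.single b 1
  set v : α → ℂ := Pi.single a 1 - Pi.single b 1
  have hu : star u = u := by simp [u]
  have hv : star v = v := by simp [v]
  refine ⟨(2⁻¹ : ℝ) • vecMulVec u (star u), (2⁻¹ : ℝ) • vecMulVec v (star v),
    (posSemidef_vecMulVec_self_star u).smul (by norm_num),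
    (posSemidef_vecMulVec_self_star v).smul (by norm_num), ?_, ?_⟩ <;>
  · simp only [hu, hv, u, v, vecMulVec_add, add_vecMulVec, vecMulVec_sub, sub_vecMulVec,
      ← single_eq_single_vecMulVec_single]
    module

theorem lapMat_eq_sum_adj {α : Type*} [Fintype α] [DecidableEq α] (G : SimpleGraph α) :
    lapMat G = ∑ e : α × α,
      if G.Adj e.1 e.2 then single e.1 e.1 (1 : ℂ) - single e.1 e.2 1 else 0 := by
  ext a b
  rw [Matrix.sum_apply, Fintype.sum_prod_type, Finset.sum_eq_single a]
  · simp only [lapMat, adjMatC, Matrix.sub_apply, diagonal_apply, of_apply, single_apply,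
      apply_ite (fun M : Matrix α α ℂ => M a b), Matrix.zero_apply]
    by_cases hab : a = b
    · subst hab
      simp only [if_true, true_and, and_self, G.irrefl, if_false, sub_zero]
      exact Finset.sum_congr rfl fun y _ => by split_ifs <;> simp_all
    · simp only [hab, if_false, and_false, true_and, zero_sub]
      rw [Finset.sum_eq_single b (fun x _ hx => by simp [hx]) (by simp)]
      split_ifs <;> simp_all
  · intro x _ hx
    simp [hx, apply_ite (fun M : Matrix α α ℂ => M a b)]
  · simp

section

variable {m : ℕ} {p : Fin m → ℕ}

theorem trace_tensorFamily (ρ : ∀ i, Matrix (Fin (p i)) (Fin (p i)) ℂ) :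
    (tensorFamily ρ).trace = ∏ i, (ρ i).trace := by
  simp only [trace, diag_apply, tensorFamily, of_apply]
  exact (Fintype.prod_sum fun i j => ρ i j j).symm

theorem tensorFamily_smul (c : Fin m → ℂ) (M : ∀ i, Matrix (Fin (p i)) (Fin (p i)) ℂ) :
    tensorFamily (fun i => c i • M i) = (∏ i, c i) • tensorFamily M := by
  ext x y
  simp [tensorFamily, Finset.prod_mul_distrib]

theorem tensorFamily_add (M N : ∀ i, Matrix (Fin (p i)) (Fin (p i)) ℂ) :
    tensorFamily (fun i => M i + N i) =
      ∑ s : Fin m → Bool, tensorFamily (fun i => if s i then N i else M i) := by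
  ext x y
  simp only [tensorFamily, of_apply, Matrix.add_apply, Matrix.sum_apply]
  rw [← Fintype.prod_sum fun i (b : Bool) => (if b then N i else M i) (x i) (y i)]
  simp [add_comm]

theorem tensorFamily_single (x y : ∀ i, Fin (p i)) :
    tensorFamily (fun i => single (x i) (y i) (1 : ℂ)) = single x y 1 := by
  ext a b
  simp only [tensorFamily, of_apply, single_apply, Finset.prod_boole, funext_iff]
  simp [forall_and]

variable (p) in
noncomputable def sepCone : PointedCone ℝ (Matrix (∀ i, Fin (p i)) (∀ i, Fin (p i)) ℂ) :=
  PointedCone.hull ℝ {A | ∃ ρ, (∀ i, IsDensityMatrix (ρ i)) ∧ tensorFamily ρ = A}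

theorem tensorFamily_mem_sepCone {ρ : ∀ i, Matrix (Fin (p i)) (Fin (p i)) ℂ}
    (hρ : ∀ i, (ρ i).PosSemidef) : tensorFamily ρ ∈ sepCone p := by
  by_cases h0 : ∃ i, (ρ i).trace = 0
  · obtain ⟨i, hi⟩ := h0
    have hzero : tensorFamily ρ = 0 := by
      ext x y
      exact Finset.prod_eq_zero (Finset.mem_univ i) (by simp [(hρ i).trace_eq_zero_iff.mp hi])
    exact hzero ▸ (sepCone p).zero_mem
  push Not at h0
  have hsplit : tensorFamily ρ =
      (∏ i, (ρ i).trace.re) • tensorFamily (fun i => (ρ i).trace⁻¹ • ρ i) := by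
    rw [tensorFamily_smul, ← Complex.coe_smul, smul_smul, Complex.ofReal_prod,
      ← Finset.prod_mul_distrib]
    simp [(hρ _).ofReal_re_trace, h0]
  rw [hsplit]
  refine (sepCone p).smul_mem (Finset.prod_nonneg fun i _ => ?_) (PointedCone.subset_hull ?_)
  · exact (Complex.nonneg_iff.mp (hρ i).trace_nonneg).1
  · exact ⟨_, fun i => isDensityMatrix_inv_trace_smul (hρ i) (h0 i), rfl⟩

theorem sepDensityFamily_of_mem_sepCone {A : Matrix (∀ i, Fin (p i)) (∀ i, Fin (p i)) ℂ}
    (hA : A ∈ sepCone p) (htr : A.trace ≠ 0) : SepDensityFamily (A.trace⁻¹ • A) := by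
  obtain ⟨n, c, g, rfl⟩ := Submodule.mem_span_set'.mp hA
  choose ρ hρ hρA using fun t => (g t).2
  have hterm : ∀ t, c t • (g t).1 = ((c t : ℝ) : ℂ) • tensorFamily (ρ t) := fun t => by
    rw [hρA, Complex.coe_smul]; rfl
  simp only [hterm] at htr ⊢
  have htrace : (∑ t, ((c t : ℝ) : ℂ) • tensorFamily (ρ t)).trace =
      ((∑ t, (c t : ℝ) : ℝ) : ℂ) := by
    simp only [trace_sum, trace_smul, trace_tensorFamily, (hρ _ _).2, Finset.prod_const_one,
      smul_eq_mul, mul_one, Complex.ofReal_sum]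
  rw [htrace] at htr ⊢
  refine ⟨n, fun t => c t / ∑ t, (c t : ℝ), ρ, fun t => ?_, ?_, hρ, ?_⟩
  · exact div_nonneg (c t).2 (Finset.sum_nonneg fun t _ => (c t).2)
  · rw [← Finset.sum_div, div_self (by exact_mod_cast htr)]
  · simp only [Finset.smul_sum, smul_smul, div_eq_inv_mul, Complex.ofReal_mul, Complex.ofReal_inv]

theorem tensorFamily_add_sub_tensorFamily_sub_mem_sepCone
    {P Q : ∀ i, Matrix (Fin (p i)) (Fin (p i)) ℂ}
    (hP : ∀ i, (P i).PosSemidef) (hQ : ∀ i, (Q i).PosSemidef) :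
    tensorFamily (fun i => P i + Q i) - tensorFamily (fun i => P i - Q i) ∈ sepCone p := by
  have hsign : ∀ s : Fin m → Bool,
      tensorFamily (fun i => if s i then -Q i else P i) =
        (∏ i, (if s i then (-1 : ℝ) else 1)) •
          tensorFamily (fun i => if s i then Q i else P i) := by
    intro s
    rw [← Complex.coe_smul, Complex.ofReal_prod, ← tensorFamily_smul]
    congr 1
    funext i
    split <;> simp
  simp only [sub_eq_add_neg (P _), tensorFamily_add, hsign, ← Finset.sum_sub_distrib]
  refine Submodule.sum_mem _ fun s _ => ?_
  convert (sepCone p).smul_mem (sub_nonneg.mpr (prod_sign_le_one s))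
    (tensorFamily_mem_sepCone (ρ := fun i => if s i then Q i else P i)
      fun i => by split; exacts [hQ i, hP i]) using 1
  rw [sub_smul, one_smul]

def mix (x y : ∀ i, Fin (p i)) (s : Fin m → Bool) : ∀ i, Fin (p i) :=
  fun i => if s i then y i else x i

theorem mix_mix_mix (x y : ∀ i, Fin (p i)) (s : Fin m → Bool) :
    mix (mix x y s) (mix y x s) s = x := by
  funext i; simp only [mix]; split <;> rfl

theorem tensorFamily_ite_single (s : Fin m → Bool) (x y x' y' : ∀ i, Fin (p i)) :
    tensorFamily (fun i => if s i then single (x' i) (y' i) (1 : ℂ) else single (x i) (y i) 1) =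
      single (mix x x' s) (mix y y' s) 1 := by
  rw [← tensorFamily_single]
  congr 1
  funext i
  simp only [mix]
  split <;> rfl

theorem sum_single_mix_sub_mem_sepCone (x y : ∀ i, Fin (p i)) :
    ∑ s, (single (mix x y s) (mix x y s) (1 : ℂ) - single (mix x y s) (mix y x s) 1) ∈
      sepCone p := by
  choose P Q hP hQ hadd hsub using fun i => exists_posSemidef_add_eq_and_sub_eq (x i) (y i)
  simp only [Finset.sum_sub_distrib, ← tensorFamily_ite_single, ← tensorFamily_add, ← hadd, ← hsub]
  exact tensorFamily_add_sub_tensorFamily_sub_mem_sepCone hP hQ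

theorem sum_adj_mix_eq {G : SimpleGraph (∀ i, Fin (p i))}
    (hG : ∀ x y s, G.Adj x y → G.Adj (mix x y s) (mix y x s)) {M : Type*} [AddCommMonoid M]
    (f : (∀ i, Fin (p i)) → (∀ i, Fin (p i)) → M) (s : Fin m → Bool) :
    ∑ e : (∀ i, Fin (p i)) × (∀ i, Fin (p i)),
        (if G.Adj e.1 e.2 then f (mix e.1 e.2 s) (mix e.2 e.1 s) else 0) =
      ∑ e : (∀ i, Fin (p i)) × (∀ i, Fin (p i)), if G.Adj e.1 e.2 then f e.1 e.2 else 0 := by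
  let φ := Function.Involutive.toPerm
    (fun e : (∀ i, Fin (p i)) × (∀ i, Fin (p i)) => (mix e.1 e.2 s, mix e.2 e.1 s))
    fun e => Prod.ext (mix_mix_mix e.1 e.2 s) (mix_mix_mix e.2 e.1 s)
  refine Fintype.sum_equiv φ _ _ fun e => ?_
  have hadj : G.Adj (φ e).1 (φ e).2 ↔ G.Adj e.1 e.2 := by
    refine ⟨fun h => ?_, hG _ _ s⟩
    simpa only [mix_mix_mix] using hG (mix e.1 e.2 s) (mix e.2 e.1 s) s h
  rw [hadj]
  rfl

theorem lapMat_mem_sepCone {G : SimpleGraph (∀ i, Fin (p i))}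
    (hG : ∀ x y s, G.Adj x y → G.Adj (mix x y s) (mix y x s)) : lapMat G ∈ sepCone p := by
  have hsum : (Fintype.card (Fin m → Bool) : ℝ) • lapMat G =
      ∑ e : (∀ i, Fin (p i)) × (∀ i, Fin (p i)), if G.Adj e.1 e.2 then
        ∑ s, (single (mix e.1 e.2 s) (mix e.1 e.2 s) (1 : ℂ) -
          single (mix e.1 e.2 s) (mix e.2 e.1 s) 1) else 0 := by
    rw [Nat.cast_smul_eq_nsmul, ← Finset.card_univ, ← Finset.sum_const, lapMat_eq_sum_adj]
    refine (Finset.sum_congr rfl fun s _ =>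
      (sum_adj_mix_eq hG (fun x y => single x x (1 : ℂ) - single x y 1) s).symm).trans ?_
    rw [Finset.sum_comm]
    simp only [Finset.sum_ite_irrel, Finset.sum_const_zero]
  rw [← (sepCone p).smul_mem_iff (by positivity : (0 : ℝ) < Fintype.card (Fin m → Bool)), hsum]
  exact Submodule.sum_mem _ fun e _ => by
    split
    exacts [sum_single_mix_sub_mem_sepCone _ _, zero_mem _]

theorem graphProdFamily_adj_mix (P : ∀ i, SimpleGraph (Fin (p i)))
    (S : Finset (Fin m → Fin 3)) {x y : ∀ i, Fin (p i)} (h : (graphProdFamily P S).Adj x y)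
    (s : Fin m → Bool) : (graphProdFamily P S).Adj (mix x y s) (mix y x s) := by
  obtain ⟨hne, c, hc, hrel⟩ := h
  refine ⟨fun heq => hne (funext fun i => ?_), c, hc, fun i => ?_⟩
  · have := congrFun heq i
    simp only [mix] at this
    split at this <;> first | exact this | exact this.symm
  · simp only [mix]
    split
    exacts [coordRel_symm _ _ (hrel i), hrel i]

end

theorem stmt_9_general {m : ℕ} {p : Fin m → ℕ} (P : ∀ i, SimpleGraph (Fin (p i)))
    (S : Finset (Fin m → Fin 3))
    (A : Matrix (∀ i, Fin (p i)) (∀ i, Fin (p i)) ℂ)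
    (hA : A = lapMat (graphProdFamily P S))
    (htr : A.trace ≠ 0) :
    SepDensityFamily (A.trace⁻¹ • A) := by
  subst hA
  exact sepDensityFamily_of_mem_sepCone
    (lapMat_mem_sepCone fun _ _ s h => graphProdFamily_adj_mix P S h s) htr

/-- the normalized Laplacian matrix of any graph product of graphs
P₁, …, P_m (with nonzero trace) is a separable density matrix in
ℂ^{p_1} × ⋯ × ℂ^{p_m}. -/
theorem stmt_9 {m : ℕ} {p : Fin m → ℕ} (P : ∀ i, SimpleGraph (Fin (p i)))
    (S : Finset (Fin m → Fin 3)) (hS : (fun _ => (1 : Fin 3)) ∉ S)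
    (A : Matrix (∀ i, Fin (p i)) (∀ i, Fin (p i)) ℂ)
    (hA : A = lapMat (graphProdFamily P S))
    (htr : A.trace ≠ 0) :
    SepDensityFamily (A.trace⁻¹ • A) :=
  stmt_9_general P S A hA htr
end

section
/- Let n = p_1 p_2 with p_1, p_2 ≥ 2, and let 1 ≤ r < p_1 with r not divisible by p_2. Then for every vertex labeling (bijection V(K_{r,n-r}) → {1,…,p_1}×{1,…,p_2}), there exists a vertex whose degree in the complete bipartite graph K_{r,n-r} differs from its degree in the partial transpose graph; consequently the normalized Laplacian of K_{r,n-r} is entangled in C^{p_1} × C^{p_2} under every vertex labeling. -/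
open Matrix Finset
open scoped Kronecker Classical ComplexOrder

/-- The partial transpose graph: {(u,v),(w,y)} is an edge iff {(u,y),(w,v)} is an
edge of the original graph. -/
def partialTranspose {α β : Type*} (G : SimpleGraph (α × β)) : SimpleGraph (α × β) where
  Adj x y := G.Adj (x.1, y.2) (y.1, x.2)
  symm := ⟨fun x y h => G.symm.symm _ _ h⟩
  loopless := ⟨fun x h => G.loopless.irrefl (x.1, x.2) h⟩

/-- The degree of a vertex: the number of neighbors. -/
noncomputable def natDeg {γ : Type*} [Fintype γ] (G : SimpleGraph γ) (x : γ) : ℕ :=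
  (Finset.univ.filter fun y => G.Adj x y).card

/-- The complete bipartite graph K_{r,n-r} on Fin n, with parts {i : i < r} and
{i : r ≤ i}. -/
def Kbip (n r : ℕ) : SimpleGraph (Fin n) :=
  SimpleGraph.fromRel fun i j => i.val < r ∧ ¬ j.val < r

/-!
Since the left part has only `r < p₁` vertices, some row `{u} × Fin p₂` consists of right-part
vertices, and each vertex `(u, v)` of it has degree `r`. In the partial transpose, `(u, v) ~ (a, b)`
iff `(u, b) ~ (a, v)`, i.e. iff `(a, v)` lies in the left part, independently of `b`; so the
degree of `(u, v)` there is `p₂` times the number of such `a`, which cannot equal `r` when `p₂ ∤ r`.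
-/

lemma natDeg_eq_card_of_adj_iff {γ : Type*} [Fintype γ] {G : SimpleGraph γ} {x : γ}
    {L : γ → Prop} [DecidablePred L] (hx : ∀ y, G.Adj x y ↔ L y) : natDeg G x = #{y | L y} := by
  simp only [natDeg, hx]

section PartialTranspose

variable {α β : Type*} [Fintype α] [Fintype β]

lemma natDeg_partialTranspose_of_row_disjoint {G : SimpleGraph (α × β)} {L : α × β → Prop}
    [DecidablePred L] (hG : ∀ x y, ¬ L x → (G.Adj x y ↔ L y)) {u : α} (hu : ∀ b, ¬ L (u, b))
    (v : β) : natDeg (partialTranspose G) (u, v) = #{a | L (a, v)} * Fintype.card β := by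
  rw [natDeg_eq_card_of_adj_iff (L := fun y => L (y.1, v)) fun y => hG _ _ (hu y.2),
    ← card_univ (α := β), ← card_product]
  congr 1
  ext y
  simp

lemma exists_row_disjoint_of_card_lt (L : α × β → Prop) [DecidablePred L]
    (hL : #{x | L x} < Fintype.card α) : ∃ u, ∀ b, ¬ L (u, b) := by
  obtain ⟨u, -, hu⟩ := exists_mem_notMem_of_card_lt_card
    ((card_image_le (f := Prod.fst)).trans_lt (hL.trans_eq (card_univ (α := α)).symm))
  exact ⟨u, fun b hb => hu (mem_image.2 ⟨(u, b), by simpa using hb, rfl⟩)⟩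

end PartialTranspose

lemma Kbip_adj_iff_of_not_lt {n r : ℕ} {i : Fin n} (hi : ¬ i.val < r) (j : Fin n) :
    (Kbip n r).Adj i j ↔ j.val < r := by
  simp only [Kbip, SimpleGraph.fromRel_adj, Ne, Fin.ext_iff]
  omega

theorem stmt_14_general (p₁ p₂ r : ℕ) (hp₂ : 2 ≤ p₂)
    (hr₂ : r < p₁) (hnd : ¬ p₂ ∣ r) :
    ∀ f : Fin (p₁ * p₂) ≃ Fin p₁ × Fin p₂,
      ∃ x, natDeg (partialTranspose ((Kbip (p₁ * p₂) r).map f.toEmbedding)) x ≠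
        natDeg ((Kbip (p₁ * p₂) r).map f.toEmbedding) x := by
  intro f
  let L : Fin p₁ × Fin p₂ → Prop := fun y => (f.symm y).val < r
  have hG : ∀ x y, ¬ L x → (((Kbip (p₁ * p₂) r).map f.toEmbedding).Adj x y ↔ L y) := by
    intro x y hx
    rw [← SimpleGraph.comap_symm, SimpleGraph.comap_adj]
    exact Kbip_adj_iff_of_not_lt hx _
  have hL : #{y | L y} = r := by
    rw [card_equiv f.symm (s := {y | L y}) (t := {i : Fin (p₁ * p₂) | i.val < r}) (by simp [L]),
      Fin.card_filter_val_lt]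
    exact min_eq_right (hr₂.le.trans (Nat.le_mul_of_pos_right _ (by omega)))
  obtain ⟨u, hu⟩ := exists_row_disjoint_of_card_lt L (by simpa [hL] using hr₂)
  refine ⟨(u, ⟨0, by omega⟩), fun h => hnd ?_⟩
  rw [natDeg_partialTranspose_of_row_disjoint hG hu, natDeg_eq_card_of_adj_iff
    (fun y => hG _ y (hu _)), hL, Fintype.card_fin] at h
  exact h ▸ dvd_mul_left _ _

/-- for n = p₁p₂ with p₁, p₂ ≥ 2, 1 ≤ r < p₁ and p₂ ∤ r, under every
vertex labeling of K_{r,n-r} by {1,…,p₁} × {1,…,p₂} some vertex has different degrees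
in K_{r,n-r} and in its partial transpose graph (hence the normalized Laplacian is
entangled in ℂ^{p₁} × ℂ^{p₂} for every vertex labeling). -/
theorem stmt_14 (p₁ p₂ r : ℕ) (hp₁ : 2 ≤ p₁) (hp₂ : 2 ≤ p₂)
    (hr₁ : 1 ≤ r) (hr₂ : r < p₁) (hnd : ¬ p₂ ∣ r) :
    ∀ f : Fin (p₁ * p₂) ≃ Fin p₁ × Fin p₂,
      ∃ x, natDeg (partialTranspose ((Kbip (p₁ * p₂) r).map f.toEmbedding)) x ≠
        natDeg ((Kbip (p₁ * p₂) r).map f.toEmbedding) x :=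
  stmt_14_general p₁ p₂ r hp₂ hr₂ hnd
end

section
/- Let n = p_1 p_2 with p_1, p_2 ≥ 2, and let G be a nontrivial graph on n vertices whose minimum degree d satisfies d < p_2 − 1. Then there exists a vertex labeling of G by {1,…,p_1}×{1,…,p_2} such that some vertex has strictly larger degree in the partial transpose graph G^{pT} than in G (hence the normalized Laplacian is entangled in C^{p_1} × C^{p_2} under that labeling). -/
/-!
Let `w` be a vertex of minimum degree `d`. Some edge `ab` avoids `w`: otherwise every other
vertex has degree at most one, so `d = 1` forces all of them to be adjacent to `w`, and then
`d = n - 1 > 1`. Let the labelling `f` put `w`, `a` and the neighbours of `w` other than `b`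
in one row with distinct columns (`d + 2 ≤ p₂` cells suffice) and put `b` in the column of `w`.
Then every neighbour of `x = f w` lies on the row or the column of `x`, where partial
transposition keeps it a neighbour, and the edge `ab` adds the neighbour `((f b).1, (f a).2)`,
which lies on neither.
-/

open Matrix Finset
open scoped Kronecker Classical ComplexOrder

lemma exists_adj_avoiding_of_natDeg_minimal {V : Type*} [Fintype V] {G : SimpleGraph V}
    (hG : G ≠ ⊥) (hV : 3 ≤ Fintype.card V) {w : V} (hw : ∀ x, natDeg G w ≤ natDeg G x) :
    ∃ a b, G.Adj a b ∧ a ≠ w ∧ b ≠ w := by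
  by_contra! hstar
  have hdeg_pos : ∀ x, 0 < natDeg G x ↔ ∃ y, G.Adj x y := by
    intro x; simp [natDeg, Finset.card_pos, Finset.Nonempty]
  obtain ⟨u, v, huv⟩ := SimpleGraph.ne_bot_iff_exists_adj.1 hG
  obtain ⟨b, hwb⟩ : ∃ b, G.Adj w b := by
    by_cases hu : u = w
    · exact ⟨v, hu ▸ huv⟩
    · exact ⟨u, hstar u v huv hu ▸ huv.symm⟩
  have hb : natDeg G b ≤ 1 := by
    calc natDeg G b ≤ #{w} := Finset.card_le_card fun z hz => by
          simp only [Finset.mem_filter, Finset.mem_univ, true_and] at hz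
          simp [hstar b z hz hwb.ne']
      _ = 1 := Finset.card_singleton w
  have hall : Finset.univ.erase w ⊆ Finset.univ.filter fun y => G.Adj w y := by
    intro x hx
    obtain ⟨y, hxy⟩ := (hdeg_pos x).1 ((hdeg_pos w).2 ⟨b, hwb⟩ |>.trans_le (hw x))
    simpa [← hstar x y hxy (Finset.ne_of_mem_erase hx)] using hxy.symm
  have hn : Fintype.card V - 1 ≤ natDeg G w :=
    calc Fintype.card V - 1 = #(Finset.univ.erase w) := by simp
      _ ≤ natDeg G w := Finset.card_le_card hall
  have := hw b
  omega

lemma natDeg_lt_natDeg_partialTranspose {α β : Type*} [Fintype α] [Fintype β]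
    (H : SimpleGraph (α × β)) {x y z : α × β}
    (hcross : ∀ v, H.Adj x v → v.1 = x.1 ∨ v.2 = x.2) (hyz : H.Adj y z)
    (hy₁ : y.1 = x.1) (hy₂ : y.2 ≠ x.2) (hz₁ : z.1 ≠ x.1) (hz₂ : z.2 = x.2) :
    natDeg H x < natDeg (partialTranspose H) x := by
  have hpT : ∀ v, (partialTranspose H).Adj x v ↔ H.Adj (x.1, v.2) (v.1, x.2) := fun _ => Iff.rfl
  refine Finset.card_lt_card (Finset.ssubset_iff_of_subset ?_ |>.2 ⟨(z.1, y.2), ?_, ?_⟩)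
  · intro v hv
    simp only [Finset.mem_filter, Finset.mem_univ, true_and, hpT] at hv ⊢
    rcases hcross v hv with h | h
    · rwa [show (x.1, v.2) = v from Prod.ext h.symm rfl, show (v.1, x.2) = x from Prod.ext h rfl,
        H.adj_comm]
    · rwa [show (x.1, v.2) = x from Prod.ext rfl h, show (v.1, x.2) = v from Prod.ext rfl h.symm]
  · simp only [Finset.mem_filter, Finset.mem_univ, true_and, hpT]
    simpa [← hy₁, ← hz₂] using hyz
  · simp only [Finset.mem_filter, Finset.mem_univ, true_and]
    exact fun h => (hcross _ h).elim hz₁ hy₂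

lemma exists_equiv_prod_row_column_placement {V α β : Type*} [Fintype V] [Fintype α] [Fintype β]
    [Nontrivial α] (hcard : Fintype.card V = Fintype.card (α × β)) {w a b : V}
    (haw : a ≠ w) (hbw : b ≠ w) (hab : a ≠ b) (N : Finset V) (hN : #N + 2 ≤ Fintype.card β) :
    ∃ f : V ≃ α × β, (f a).1 = (f w).1 ∧ (f a).2 ≠ (f w).2 ∧ (f b).1 ≠ (f w).1 ∧
      (f b).2 = (f w).2 ∧ ∀ s ∈ N, (f s).1 = (f w).1 ∨ (f s).2 = (f w).2 := by
  obtain ⟨i₀, i₁, hi⟩ := exists_pair_ne α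
  set U := (insert w (insert a N)).erase b
  have hwU : w ∈ U := by simp [U, hbw.symm]
  have haU : a ∈ U := by simp [U, hab]
  obtain ⟨ι⟩ : Nonempty (U ↪ β) := by
    refine Function.Embedding.nonempty_of_card_le ?_
    rw [Fintype.card_coe]
    exact (Finset.card_erase_le.trans (Finset.card_insert_le _ _)).trans
      (Nat.succ_le_succ (Finset.card_insert_le _ _)) |>.trans hN
  let F : V → α × β := fun t => if h : t ∈ U then (i₀, ι ⟨t, h⟩) else (i₁, ι ⟨w, hwU⟩)
  have hF : Set.InjOn F ↑(insert b U) := by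
    intro s hs t ht hst
    by_cases hsU : s ∈ U <;> by_cases htU : t ∈ U <;>
      simp only [F, hsU, htU, dite_true, dite_false, Prod.mk.injEq] at hst
    · exact congrArg Subtype.val (ι.injective hst.2)
    · exact absurd hst.1 hi
    · exact absurd hst.1.symm hi
    · simp only [Finset.coe_insert, Set.mem_insert_iff, Finset.mem_coe] at hs ht
      exact (hs.resolve_right hsU).trans (ht.resolve_right htU).symm
  obtain ⟨g, hg⟩ := Finset.exists_equiv_extend_of_card_eq (t := (Finset.univ : Finset (α × β)))
    (by rw [hcard, Finset.card_univ]) (Finset.subset_univ _) hF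
  let f : V ≃ α × β := g.trans (Equiv.subtypeUnivEquiv Finset.mem_univ)
  have hf : ∀ t ∈ insert b U, f t = F t := hg
  have hfU : ∀ t (ht : t ∈ U), f t = (i₀, ι ⟨t, ht⟩) := fun t ht => by
    simp [hf t (Finset.mem_insert_of_mem ht), F, ht]
  have hfb : f b = (i₁, ι ⟨w, hwU⟩) := by
    simp [hf b (Finset.mem_insert_self b U), F, U]
  refine ⟨f, ?_, ?_, ?_, ?_, fun s hs => ?_⟩
  · rw [hfU a haU, hfU w hwU]
  · rw [hfU a haU, hfU w hwU]
    exact ι.injective.ne (by simpa using haw)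
  · rw [hfb, hfU w hwU]
    exact hi.symm
  · rw [hfb, hfU w hwU]
  · by_cases hsb : s = b
    · right
      rw [hsb, hfb, hfU w hwU]
    · left
      have hsU : s ∈ U := by simp [U, hsb, hs]
      rw [hfU s hsU, hfU w hwU]

/-- for n = p₁p₂ with p₁, p₂ ≥ 2 and G a nontrivial graph on n
vertices whose minimum degree d satisfies d < p₂ − 1 (i.e. some vertex w has
degree d with d + 1 < p₂), there is a vertex labeling under which some vertex has
strictly larger degree in the partial transpose graph than in G (hence the
normalized Laplacian is entangled in ℂ^{p₁} × ℂ^{p₂} for that labeling). -/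
theorem stmt_16 (p₁ p₂ : ℕ) (hp₁ : 2 ≤ p₁) (hp₂ : 2 ≤ p₂)
    (G : SimpleGraph (Fin (p₁ * p₂))) (hnt : G ≠ ⊥)
    (hmin : ∃ w, (∀ x, natDeg G w ≤ natDeg G x) ∧ natDeg G w + 1 < p₂) :
    ∃ f : Fin (p₁ * p₂) ≃ Fin p₁ × Fin p₂,
      ∃ x, natDeg (G.map f.toEmbedding) x <
        natDeg (partialTranspose (G.map f.toEmbedding)) x := by
  obtain ⟨w, hw, hwp⟩ := hmin
  have : Nontrivial (Fin p₁) := Fin.nontrivial_iff_two_le.2 hp₁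
  obtain ⟨a, b, hab, haw, hbw⟩ := exists_adj_avoiding_of_natDeg_minimal hnt
    (by rw [Fintype.card_fin]; exact le_trans (by norm_num) (Nat.mul_le_mul hp₁ hp₂)) hw
  obtain ⟨f, ha₁, ha₂, hb₁, hb₂, hN⟩ := 
    exists_equiv_prod_row_column_placement (α := Fin p₁) (β := Fin p₂) (by simp) haw hbw hab.ne
    (Finset.univ.filter fun y => G.Adj w y) (by rw [Fintype.card_fin]; exact hwp)
  refine ⟨f, f w, natDeg_lt_natDeg_partialTranspose _ (fun v hv => ?_)
    (SimpleGraph.map_adj_apply.2 hab) ha₁ ha₂ hb₁ hb₂⟩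
  rw [← f.apply_symm_apply v] at hv ⊢
  exact hN _ (by simpa using SimpleGraph.map_adj_apply.1 hv)
end

section
/- Let n = 2 p_2 with p_2 ≥ 3 (so n > 4), and let G be a graph on n vertices that is neither complete nor trivial. Then there exists a vertex labeling of G by {1,…,2}×{1,…,p_2} such that the normalized Laplacian of G is entangled in C^2 × C^{p_2}; equivalently, some vertex has differing degrees in G and the partial transpose graph under that labeling. -/
/-!
Suppose every labeling gave equal degrees. Compare the partial-transpose degree of the vertex
labelled `(0, j)` under a labeling and under the same labeling with the labels `(0, l)` and
`(1, l)` exchanged: the degree in `G` is the same, and the only terms that change show that the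
vertices `r, s` labelled `(0, l), (1, l)` have equally many neighbours among the vertices `a, b`
labelled `(0, j), (1, j)`. Any four distinct vertices can be labelled this way, and with at least
five vertices this forces all vertices other than `a` to agree on adjacency to `a`; by symmetry
of adjacency `G` is then empty or complete.
-/

open Matrix Finset
open scoped Kronecker Classical ComplexOrder

section PartialTransposeDegree

variable {V W α β : Type*}

lemma natDeg_comap_equiv [Fintype V] [Fintype W] (G : SimpleGraph V) (g : W ≃ V) (x : W) :
    natDeg (G.comap g) x = natDeg G (g x) :=
  card_equiv g (by simp)

lemma natDeg_partialTranspose [Fintype α] [Fintype β] (H : SimpleGraph (α × β)) (i : α) (j : β) :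
    natDeg (partialTranspose H) (i, j) = ∑ y, #{m | H.Adj (i, y) (m, j)} := by
  simp only [natDeg, card_filter, Fintype.sum_prod_type_right]
  rfl

/-- Exchanging the labels `(i, l)` and `(k, l)` only changes the `y = l` term of
`natDeg_partialTranspose`. -/
lemma natDeg_partialTranspose_comap_swap_add [Fintype α] [Fintype β] [DecidableEq α]
    [DecidableEq β] (H : SimpleGraph (α × β)) (i k : α) {j l : β} (hjl : j ≠ l) :
    natDeg (partialTranspose (H.comap (Equiv.swap (i, l) (k, l)))) (i, j) +
        #{m | H.Adj (i, l) (m, j)} =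
      natDeg (partialTranspose H) (i, j) + #{m | H.Adj (k, l) (m, j)} := by
  have hcol : ∀ m, Equiv.swap (i, l) (k, l) (m, j) = (m, j) := fun m =>
    Equiv.swap_apply_of_ne_of_ne (by simp [hjl]) (by simp [hjl])
  have hrow : ∀ y ∈ univ.erase l, Equiv.swap (i, l) (k, l) (i, y) = (i, y) := fun y hy =>
    Equiv.swap_apply_of_ne_of_ne (by simp [ne_of_mem_erase hy]) (by simp [ne_of_mem_erase hy])
  rw [natDeg_partialTranspose, natDeg_partialTranspose, ← add_sum_erase _ _ (mem_univ l),
    ← add_sum_erase _ _ (mem_univ l)]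
  simp only [SimpleGraph.comap_adj, hcol, Equiv.swap_apply_left]
  rw [sum_congr rfl fun y hy => by rw [hrow y hy]]
  ring

end PartialTransposeDegree

lemma Equiv.exists_prod_apply_eq_of_nodup {α β V : Type*} (e : α × β ≃ V) {i k : α} {j l : β}
    (hik : i ≠ k) (hjl : j ≠ l) {a b r s : V} (habrs : [a, b, r, s].Nodup) :
    ∃ g : α × β ≃ V, g (i, j) = a ∧ g (k, j) = b ∧ g (i, l) = r ∧ g (k, l) = s := by
  let labels := [(i, j), (k, j), (i, l), (k, l)]
  have hlabels : labels.Nodup := by simp [labels, hik, hjl, hik.symm]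
  obtain ⟨σ, hσ⟩ := Equiv.Perm.exists_extending_pair (e ∘ labels.get) [a, b, r, s].get
    (e.injective.comp (List.nodup_iff_injective_get.mp hlabels))
    (List.nodup_iff_injective_get.mp habrs)
  exact ⟨e.trans σ, hσ 0, hσ 1, hσ 2, hσ 3⟩

lemma adj_count_eq_of_forall_natDeg_partialTranspose_eq {V β : Type*} [Fintype V] [Fintype β]
    [DecidableEq β] (G : SimpleGraph V) (e : V ≃ Fin 2 × β) {j l : β} (hjl : j ≠ l)
    (hdeg : ∀ (f : V ≃ Fin 2 × β) x,
      natDeg (partialTranspose (G.map f.toEmbedding)) x = natDeg (G.map f.toEmbedding) x)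
    (a b r s : V) (habrs : [a, b, r, s].Nodup) :
    (if G.Adj r a then 1 else 0) + (if G.Adj r b then 1 else 0) =
      (if G.Adj s a then 1 else 0) + (if G.Adj s b then 1 else 0) := by
  obtain ⟨g, ha, hb, hr, hs⟩ := e.symm.exists_prod_apply_eq_of_nodup zero_ne_one hjl habrs
  have hdeg' : ∀ f : Fin 2 × β ≃ V, f (0, j) = a →
      natDeg (partialTranspose (G.comap f)) (0, j) = natDeg G a := fun f hf => by
    rw [← f.symm_symm, ← Equiv.coe_toEmbedding, ← SimpleGraph.map_symm, hdeg,
      SimpleGraph.map_symm, Equiv.coe_toEmbedding, natDeg_comap_equiv, f.symm_symm, hf]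
  have hσ : (Equiv.swap ((0 : Fin 2), l) (1, l)).trans g (0, j) = a := by
    rw [Equiv.trans_apply, Equiv.swap_apply_of_ne_of_ne (by simp [hjl]) (by simp [hjl]), ha]
  have hswap := natDeg_partialTranspose_comap_swap_add (G.comap g) 0 1 hjl
  rw [SimpleGraph.comap_comap, ← Equiv.coe_trans, hdeg' _ hσ, hdeg' g ha] at hswap
  simp only [card_filter, Fin.sum_univ_two, SimpleGraph.comap_adj, ha, hb, hr, hs] at hswap
  exact Nat.add_left_cancel hswap

/-- Combining the hypothesis for the pairs `{a, b}`, `{a, c}` and `{b, c}` isolates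
`G.Adj r a ↔ G.Adj s a`. -/
lemma SimpleGraph.eq_bot_or_eq_top_of_adj_count_eq {V : Type*} [Fintype V] (G : SimpleGraph V)
    (hV : 5 ≤ Fintype.card V)
    (h : ∀ a b r s : V, [a, b, r, s].Nodup →
      (if G.Adj r a then 1 else 0) + (if G.Adj r b then 1 else 0) =
        (if G.Adj s a then 1 else 0) + (if G.Adj s b then 1 else 0)) :
    G = ⊥ ∨ G = ⊤ := by
  have hcol : ∀ r s a : V, r ≠ a → s ≠ a → (G.Adj r a ↔ G.Adj s a) := by
    intro r s a hra hsa
    rcases eq_or_ne r s with rfl | hrs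
    · rfl
    have hrest : 1 < #(univ \ {r, s, a}) := by
      rw [card_sdiff_of_subset (subset_univ _), card_univ]
      have := card_le_three (a := r) (b := s) (c := a)
      omega
    obtain ⟨b, hb, c, hc, hb_ne_c⟩ := one_lt_card.mp hrest
    simp only [mem_sdiff, mem_univ, mem_insert, mem_singleton, true_and, not_or] at hb hc
    have hab := h a b r s (by simp [*, Ne.symm])
    have hac := h a c r s (by simp [*, Ne.symm])
    have hbc := h b c r s (by simp [*, Ne.symm])
    constructor <;> intro hadj <;> by_contra hnadj <;> split_ifs at hab hac hbc <;> omega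
  have hpair : ∀ x y u v : V, x ≠ y → u ≠ v → G.Adj x y → G.Adj u v := by
    intro x y u v hxy huv hadj
    rcases eq_or_ne u y with rfl | huy
    · exact ((hcol x v u hxy huv.symm).mp hadj).symm
    · exact ((hcol y v u huy.symm huv.symm).mp ((hcol x u y hxy huy).mp hadj).symm).symm
  by_cases hedge : ∃ u v, G.Adj u v
  · obtain ⟨u, v, huv⟩ := hedge
    right
    ext x y
    exact ⟨G.ne_of_adj, fun hxy => hpair u v x y (G.ne_of_adj huv) hxy huv⟩
  · push Not at hedge
    left
    ext x y
    exact ⟨fun hxy => hedge x y hxy, False.elim⟩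

/-- for n = 2p₂ with p₂ ≥ 3 and G a graph on n vertices that is
neither complete nor trivial, there is a vertex labeling by {1,2} × {1,…,p₂} under
which some vertex has different degrees in G and in the partial transpose graph
(hence the normalized Laplacian of G is entangled in ℂ² × ℂ^{p₂} for that
labeling). -/
theorem stmt_18 (p₂ : ℕ) (hp₂ : 3 ≤ p₂)
    (G : SimpleGraph (Fin (2 * p₂))) (hnt : G ≠ ⊥) (hnc : G ≠ ⊤) :
    ∃ f : Fin (2 * p₂) ≃ Fin 2 × Fin p₂,
      ∃ x, natDeg (partialTranspose (G.map f.toEmbedding)) x ≠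
        natDeg (G.map f.toEmbedding) x := by
  by_contra! hdeg
  have hV : 5 ≤ Fintype.card (Fin (2 * p₂)) := by simp only [Fintype.card_fin]; omega
  have h01 : (⟨0, by omega⟩ : Fin p₂) ≠ ⟨1, by omega⟩ := by simp
  rcases G.eq_bot_or_eq_top_of_adj_count_eq hV
    (adj_count_eq_of_forall_natDeg_partialTranspose_eq G finProdFinEquiv.symm h01 hdeg)
    with hbot | htop
  exacts [hnt hbot, hnc htop]
end
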